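/- Let C_1 and C_2 be LCD codes over the binary field F_2 with parameters [n, k_1, d_1] and [n, k_2, d_2] respectively, and let A be the 3×3 matrix over F_2 with rows (1,0,1), (1,1,0), (1,1,1). Then the matrix-product code C = [C_1, C_1, C_2]A is an LCD code over F_2 with parameters [3n, 2k_1 + k_2, ≥ min{2d_1, d_2}]. -/

import Mathlib

/-!
Write `Φ c` for the codeword with blocks `(c₀ + c₁ + c₂, c₁ + c₂, c₀ + c₂)`. The matrix `A` is
invertible, so `Φ` is injective on `C₁ × C₁ × C₂` and the dimensions add up. Over `𝔽₂`,
`A Aᵀ` is the permutation matrix of the transposition `(0 1)`, so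
`⟨Φ c, Φ e⟩ = ⟨c₀, e₁⟩ + ⟨c₁, e₀⟩ + ⟨c₂, e₂⟩`. The first two components both range over `C₁`.
Hence if `Φ c` is orthogonal to the whole code, each `c_i` lies in `C_i ∩ C_i^⊥ = 0`.
For the distance: if `c₂ = 0`, the blocks are `c₀ + c₁, c₁, c₀ ∈ C₁`, and at least two of them
are nonzero. Otherwise `c₂ = (c₁ + c₂) + (c₀ + c₂) - (c₀ + c₁ + c₂)`, so the weight of `Φ c` is
at least `wt c₂ ≥ d₂`.
-/

open Polynomial Matrix Finset

variable {F : Type*} [Field F]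

/-- The minimum (Hamming) distance of a linear code `C ⊆ F^ι`:
the least Hamming weight of a nonzero codeword. -/
noncomputable def minDist {ι : Type*} [Fintype ι] [DecidableEq F]
    (C : Submodule F (ι → F)) : ℕ :=
  sInf {d | ∃ x ∈ C, x ≠ 0 ∧ hammingNorm x = d}

/-- The Euclidean dual of a linear code. -/
def dualCode {ι : Type*} [Fintype ι] (C : Submodule F (ι → F)) :
    Submodule F (ι → F) where
  carrier := {a | ∀ b ∈ C, ∑ i, a i * b i = 0}
  add_mem' := by
    intro a b ha hb c hc
    simp only [Pi.add_apply, add_mul, Finset.sum_add_distrib,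
      ha c hc, hb c hc, add_zero]
  zero_mem' := by
    intro b hb
    simp
  smul_mem' := by
    intro r a ha b hb
    simp only [Pi.smul_apply, smul_eq_mul, mul_assoc, ← Finset.mul_sum,
      ha b hb, mul_zero]

/-- `C` is a linear complementary dual (LCD) code. -/
def IsLCD {ι : Type*} [Fintype ι] (C : Submodule F (ι → F)) : Prop :=
  C ⊓ dualCode C = ⊥

/-- The Hermitian dual (with respect to `⟨a,b⟩ = ∑ i, a i * (b i)^l`) of a linear code. -/
def hermitianDual (l : ℕ) {ι : Type*} [Fintype ι] (C : Submodule F (ι → F)) :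
    Submodule F (ι → F) where
  carrier := {a | ∀ b ∈ C, ∑ i, a i * (b i) ^ l = 0}
  add_mem' := by
    intro a b ha hb c hc
    simp only [Pi.add_apply, add_mul, Finset.sum_add_distrib,
      ha c hc, hb c hc, add_zero]
  zero_mem' := by
    intro b hb
    simp
  smul_mem' := by
    intro r a ha b hb
    simp only [Pi.smul_apply, smul_eq_mul, mul_assoc, ← Finset.mul_sum,
      ha b hb, mul_zero]

/-- `C` is a Hermitian linear complementary dual code. -/
def IsHermitianLCD (l : ℕ) {ι : Type*} [Fintype ι] (C : Submodule F (ι → F)) : Prop :=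
  C ⊓ hermitianDual l C = ⊥

/-- The matrix-product code `[C_1, …, C_s]·A`: all concatenated vectors
`(∑ i a_{i1} c_i, …, ∑ i a_{im} c_i)` with `c_i ∈ C_i`; coordinates are indexed by
`Fin m × Fin n` (block `j`, position `t` within block). -/
def matrixProductCode {s m n : ℕ} (A : Matrix (Fin s) (Fin m) F)
    (C : Fin s → Submodule F (Fin n → F)) :
    Submodule F (Fin m × Fin n → F) where
  carrier := {x | ∃ c : Fin s → (Fin n → F), (∀ i, c i ∈ C i) ∧
    x = fun p => ∑ i, A i p.1 * c i p.2}
  add_mem' := by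
    rintro x y ⟨c, hc, rfl⟩ ⟨d, hd, rfl⟩
    refine ⟨fun i => c i + d i, fun i => (C i).add_mem (hc i) (hd i), ?_⟩
    funext p
    simp [mul_add, Finset.sum_add_distrib]
  zero_mem' := ⟨0, fun i => (C i).zero_mem, by funext p; simp⟩
  smul_mem' := by
    rintro r x ⟨c, hc, rfl⟩
    refine ⟨fun i => r • c i, fun i => (C i).smul_mem r (hc i), ?_⟩
    funext p
    simp [Finset.mul_sum, mul_left_comm]

/-- A matrix is non-singular by columns (NSC) if, for every `t ≤ s` and every strictly
increasing choice of `t` columns, the `t × t` submatrix formed from the first `t` rows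
and those columns is non-singular. -/
def NSC {s m : ℕ} (A : Matrix (Fin s) (Fin m) F) : Prop :=
  ∀ (t : ℕ) (ht : t ≤ s) (j : Fin t → Fin m), StrictMono j →
    (Matrix.of fun a b : Fin t => A (Fin.castLE ht a) (j b)).det ≠ 0

/-- The cyclic code of length `n` with generator polynomial `g` (a divisor of `Xⁿ - 1`),
viewed in `F^n` via the coefficient identification: a word `c` lies in the code iff the
associated polynomial `∑ cᵢ Xⁱ` (of degree `< n`) is a multiple of `g`. -/
def cyclicCode (n : ℕ) (g : F[X]) : Submodule F (Fin n → F) where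
  carrier := {c | g ∣ ∑ i : Fin n, Polynomial.C (c i) * Polynomial.X ^ (i : ℕ)}
  add_mem' := by
    intro a b ha hb
    have h : (∑ i : Fin n, Polynomial.C ((a + b) i) * Polynomial.X ^ (i : ℕ))
        = (∑ i : Fin n, Polynomial.C (a i) * Polynomial.X ^ (i : ℕ))
          + (∑ i : Fin n, Polynomial.C (b i) * Polynomial.X ^ (i : ℕ)) := by
      simp [add_mul, Finset.sum_add_distrib]
    simp only [Set.mem_setOf_eq] at ha hb ⊢
    rw [h]
    exact dvd_add ha hb
  zero_mem' := by simp
  smul_mem' := by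
    intro r a ha
    have h : (∑ i : Fin n, Polynomial.C ((r • a) i) * Polynomial.X ^ (i : ℕ))
        = Polynomial.C r * ∑ i : Fin n, Polynomial.C (a i) * Polynomial.X ^ (i : ℕ) := by
      simp [Finset.mul_sum, mul_assoc]
    simp only [Set.mem_setOf_eq] at ha ⊢
    rw [h]
    exact ha.mul_left _

/-- The conjugate-reciprocal polynomial
`f^⊥(x) = a₀^{-l} (a_k^l + a_{k-1}^l x + ⋯ + a₀^l x^k)` of `f = a₀ + a₁ x + ⋯ + a_k x^k`. -/
noncomputable def conjReciprocal (l : ℕ) (f : F[X]) : F[X] :=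
  Polynomial.C ((f.coeff 0 ^ l)⁻¹) *
    ∑ i ∈ Finset.range (f.natDegree + 1),
      Polynomial.C (f.coeff (f.natDegree - i) ^ l) * Polynomial.X ^ i

section MatrixProductCode

variable {s m n : ℕ}

def matrixProductMap (A : Matrix (Fin s) (Fin m) F) :
    (Fin s → Fin n → F) →ₗ[F] (Fin m × Fin n → F) where
  toFun c p := ∑ i, A i p.1 * c i p.2
  map_add' c e := by
    funext p
    simp only [Pi.add_apply, mul_add, Finset.sum_add_distrib]
  map_smul' r c := by
    funext p
    simp only [Pi.smul_apply, smul_eq_mul, RingHom.id_apply, Finset.mul_sum, mul_left_comm]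

@[simp]
lemma matrixProductMap_apply (A : Matrix (Fin s) (Fin m) F) (c : Fin s → Fin n → F)
    (p : Fin m × Fin n) : matrixProductMap A c p = ∑ i, A i p.1 * c i p.2 :=
  rfl

lemma matrixProductCode_eq_map (A : Matrix (Fin s) (Fin m) F)
    (C : Fin s → Submodule F (Fin n → F)) :
    matrixProductCode A C = (Submodule.pi Set.univ C).map (matrixProductMap A) := by
  ext x
  simp only [matrixProductCode, Submodule.mem_mk, Submodule.mem_map, Submodule.mem_pi,
    Set.mem_univ, true_implies]
  exact exists_congr fun c => and_congr_right fun _ => eq_comm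

lemma matrixProductMap_injective {A : Matrix (Fin s) (Fin m) F}
    (hA : LinearIndependent F A.row) :
    Function.Injective (matrixProductMap (n := n) A) := by
  rw [← LinearMap.ker_eq_bot, LinearMap.ker_eq_bot']
  intro c hc
  have hblock : ∀ t, (fun i => c i t) ᵥ* A = 0 := fun t => by
    funext j
    simpa [vecMul, dotProduct, mul_comm] using congrFun hc (j, t)
  funext i t
  exact congrFun (Matrix.vecMul_injective_iff.mpr hA ((hblock t).trans (zero_vecMul A).symm)) i

def Submodule.piUnivEquiv {ι R : Type*} {φ : ι → Type*} [Semiring R]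
    [∀ i, AddCommMonoid (φ i)] [∀ i, Module R (φ i)] (p : ∀ i, Submodule R (φ i)) :
    Submodule.pi Set.univ p ≃ₗ[R] ∀ i, p i where
  toFun x i := ⟨x.1 i, x.2 i trivial⟩
  invFun x := ⟨fun i => x i, fun i _ => (x i).2⟩
  map_add' _ _ := rfl
  map_smul' _ _ := rfl
  left_inv _ := rfl
  right_inv _ := rfl

lemma finrank_matrixProductCode {A : Matrix (Fin s) (Fin m) F} (hA : LinearIndependent F A.row)
    (C : Fin s → Submodule F (Fin n → F)) :
    Module.finrank F (matrixProductCode A C) = ∑ i, Module.finrank F (C i) := by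
  rw [matrixProductCode_eq_map,
    ← (Submodule.equivMapOfInjective _ (matrixProductMap_injective hA) _).finrank_eq,
    (Submodule.piUnivEquiv C).finrank_eq, Module.finrank_pi_fintype]

lemma matrixProductMap_dotProduct (A : Matrix (Fin s) (Fin m) F) (c e : Fin s → Fin n → F) :
    matrixProductMap A c ⬝ᵥ matrixProductMap A e = ∑ i, ∑ j, (A * Aᵀ) i j * (c i ⬝ᵥ e j) :=
  calc matrixProductMap A c ⬝ᵥ matrixProductMap A e
      = ∑ p : Fin m × Fin n, ∑ i, ∑ j, A i p.1 * A j p.1 * (c i p.2 * e j p.2) := by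
        simp only [dotProduct, matrixProductMap_apply, Finset.sum_mul_sum]
        exact Finset.sum_congr rfl fun p _ => by simp only [mul_mul_mul_comm]
    _ = ∑ i, ∑ j, ∑ p : Fin m × Fin n, A i p.1 * A j p.1 * (c i p.2 * e j p.2) := by
        rw [Finset.sum_comm]
        exact Finset.sum_congr rfl fun i _ => Finset.sum_comm
    _ = ∑ i, ∑ j, (A * Aᵀ) i j * (c i ⬝ᵥ e j) := by
        simp only [dotProduct, mul_apply, transpose_apply, Finset.sum_mul_sum,
          Fintype.sum_prod_type]

lemma mem_dualCode_iff {ι : Type*} [Fintype ι] {C : Submodule F (ι → F)} {a : ι → F} :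
    a ∈ dualCode C ↔ ∀ b ∈ C, a ⬝ᵥ b = 0 :=
  Iff.rfl

lemma isLCD_matrixProductCode {A : Matrix (Fin s) (Fin m) F}
    {C : Fin s → Submodule F (Fin n → F)}
    (σ : Equiv.Perm (Fin s)) (hA : A * Aᵀ = σ.permMatrix F) (hσ : ∀ i, C (σ i) = C i)
    (hC : ∀ i, IsLCD (C i)) : IsLCD (matrixProductCode A C) := by
  rw [IsLCD, matrixProductCode_eq_map, eq_bot_iff]
  rintro x ⟨⟨c, hc, rfl⟩, hxD⟩
  have hself : ∀ i, c i ∈ C (σ i) ⊓ dualCode (C (σ i)) := fun i => by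
    refine ⟨(hσ i).symm ▸ hc i trivial, mem_dualCode_iff.mpr fun e he => ?_⟩
    have hsingle : Pi.single (σ i) e ∈ Submodule.pi Set.univ C := fun j _ => by
      by_cases hj : j = σ i
      · subst hj; simpa using he
      · simp [hj]
    have := mem_dualCode_iff.mp hxD _ ⟨_, hsingle, rfl⟩
    rw [matrixProductMap_dotProduct, hA] at this
    simpa [Pi.single_apply, apply_ite, PEquiv.toMatrix_apply] using this
  have hc0 : c = 0 := funext fun i => (Submodule.mem_bot F).mp ((hC (σ i)).le (hself i))
  simp [hc0]

end MatrixProductCode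

section Hamming

variable {ι : Type*} [Fintype ι] {β : ι → Type*} [∀ i, DecidableEq (β i)]

lemma hammingNorm_add_le [∀ i, AddZeroClass (β i)] (x y : ∀ i, β i) :
    hammingNorm (x + y) ≤ hammingNorm x + hammingNorm y := by
  classical
  refine (Finset.card_le_card fun i hi => ?_).trans (Finset.card_union_le _ _)
  by_contra hxy
  simp_all

lemma hammingNorm_neg [∀ i, AddGroup (β i)] (x : ∀ i, β i) : hammingNorm (-x) = hammingNorm x :=
  hammingNorm_comp (fun _ => Neg.neg) (fun _ => neg_injective) fun _ => neg_zero

lemma hammingNorm_sub_le [∀ i, AddGroup (β i)] (x y : ∀ i, β i) :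
    hammingNorm (x - y) ≤ hammingNorm x + hammingNorm y := by
  simpa [sub_eq_add_neg, hammingNorm_neg] using hammingNorm_add_le x (-y)

lemma hammingNorm_prod_eq_sum {κ γ : Type*} [Fintype κ] [Zero γ] [DecidableEq γ] (x : κ × ι → γ) :
    hammingNorm x = ∑ j, hammingNorm fun t => x (j, t) := by
  simp only [hammingNorm, Finset.card_filter, Fintype.sum_prod_type]

end Hamming

section MinDist

variable {ι : Type*} [Fintype ι] [DecidableEq F] {C : Submodule F (ι → F)}

lemma minDist_le {x : ι → F} (hx : x ∈ C) (hx0 : x ≠ 0) : minDist C ≤ hammingNorm x :=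
  Nat.sInf_le ⟨x, hx, hx0, rfl⟩

lemma le_minDist {d : ℕ} (hC : C ≠ ⊥) (h : ∀ x ∈ C, x ≠ 0 → d ≤ hammingNorm x) :
    d ≤ minDist C := by
  obtain ⟨x, hx, hx0⟩ := (Submodule.ne_bot_iff C).mp hC
  exact le_csInf ⟨_, x, hx, hx0, rfl⟩ fun _ ⟨y, hy, hy0, hd⟩ => hd ▸ h y hy hy0

@[simp]
lemma minDist_bot : minDist (⊥ : Submodule F (ι → F)) = 0 := by
  simp [minDist]

lemma two_mul_minDist_le {u v : ι → F} (hu : u ∈ C) (hv : v ∈ C) (huv : u ≠ 0 ∨ v ≠ 0) :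
    2 * minDist C ≤ hammingNorm (u + v) + hammingNorm v + hammingNorm u := by
  rcases eq_or_ne u 0 with rfl | hu0
  · have := minDist_le hv (huv.resolve_left (not_not.mpr rfl))
    simp only [zero_add, hammingNorm_zero]
    omega
  rcases eq_or_ne v 0 with rfl | hv0
  · have := minDist_le hu hu0
    simp only [add_zero, hammingNorm_zero]
    omega
  have := minDist_le hu hu0
  have := minDist_le hv hv0
  omega

end MinDist

section Construction

variable {n : ℕ}

lemma hammingNorm_matrixProductMap_fin_three [DecidableEq F] (c : Fin 3 → Fin n → F) :
    hammingNorm (matrixProductMap !![1, 0, 1; 1, 1, 0; 1, 1, 1] c)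
      = hammingNorm (c 0 + c 1 + c 2) + hammingNorm (c 1 + c 2) + hammingNorm (c 0 + c 2) := by
  rw [hammingNorm_prod_eq_sum, Fin.sum_univ_three]
  congr 2 <;> congr 1 <;> funext t <;> simp [Fin.sum_univ_three]

lemma min_le_minDist_matrixProductCode_fin_three [DecidableEq F]
    (C₁ C₂ : Submodule F (Fin n → F)) :
    min (2 * minDist C₁) (minDist C₂)
      ≤ minDist (matrixProductCode !![1, 0, 1; 1, 1, 0; 1, 1, 1] ![C₁, C₁, C₂]) := by
  rcases eq_or_ne C₁ ⊥ with rfl | hC₁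
  · simp
  rw [matrixProductCode_eq_map]
  refine le_minDist ?_ ?_
  · obtain ⟨u, hu, hu0⟩ := (Submodule.ne_bot_iff C₁).mp hC₁
    have hw := hammingNorm_matrixProductMap_fin_three ![u, 0, 0]
    simp only [Matrix.cons_val, add_zero, hammingNorm_zero] at hw
    refine (Submodule.ne_bot_iff _).mpr ⟨_, ⟨![u, 0, 0], fun i _ => ?_, rfl⟩, fun h0 => hu0 ?_⟩
    · fin_cases i <;> simp [hu]
    · rw [h0, hammingNorm_zero] at hw
      exact hammingNorm_eq_zero.mp (by omega)
  rintro _ ⟨c, hc, rfl⟩ hx0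
  have hc₀ : c 0 ∈ C₁ := hc 0 trivial
  have hc₁ : c 1 ∈ C₁ := hc 1 trivial
  have hc₂ : c 2 ∈ C₂ := hc 2 trivial
  rw [hammingNorm_matrixProductMap_fin_three]
  by_cases h₂ : c 2 = 0
  · have h01 : c 0 ≠ 0 ∨ c 1 ≠ 0 := by
      by_contra! h01
      apply hx0
      rw [show c = 0 from funext fun i => by fin_cases i <;> simp [h01.1, h01.2, h₂], map_zero]
    have := two_mul_minDist_le hc₀ hc₁ h01
    simp only [h₂, add_zero]
    omega
  · have hsum : c 2 = (c 1 + c 2) + (c 0 + c 2) - (c 0 + c 1 + c 2) := by abel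
    have hle := calc
      hammingNorm (c 2)
          ≤ hammingNorm ((c 1 + c 2) + (c 0 + c 2)) + hammingNorm (c 0 + c 1 + c 2) :=
        (congrArg hammingNorm hsum).trans_le (hammingNorm_sub_le _ _)
      _ ≤ hammingNorm (c 1 + c 2) + hammingNorm (c 0 + c 2) + hammingNorm (c 0 + c 1 + c 2) :=
        Nat.add_le_add_right (hammingNorm_add_le _ _) _
    have := minDist_le hc₂ h₂
    omega

end Construction

lemma mul_transpose_eq_permMatrix_swap :
    (!![1, 0, 1; 1, 1, 0; 1, 1, 1] * !![1, 0, 1; 1, 1, 0; 1, 1, 1]ᵀ :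
        Matrix (Fin 3) (Fin 3) (ZMod 2)) = (Equiv.swap 0 1).permMatrix (ZMod 2) := by
  decide

lemma linearIndependent_row_fin_three :
    LinearIndependent F (!![1, 0, 1; 1, 1, 0; 1, 1, 1] : Matrix (Fin 3) (Fin 3) F).row := by
  refine Matrix.linearIndependent_rows_of_isUnit ((Matrix.isUnit_iff_isUnit_det _).mpr ?_)
  simp [Matrix.det_fin_three]

theorem stmt19_general {n : ℕ} (C₁ C₂ : Submodule (ZMod 2) (Fin n → ZMod 2))
    (k₁ d₁ k₂ d₂ : ℕ)
    (hLCD₁ : IsLCD C₁) (hLCD₂ : IsLCD C₂)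
    (hk₁ : Module.finrank (ZMod 2) C₁ = k₁) (hd₁ : minDist C₁ = d₁)
    (hk₂ : Module.finrank (ZMod 2) C₂ = k₂) (hd₂ : minDist C₂ = d₂) :
    IsLCD (matrixProductCode (!![1,0,1; 1,1,0; 1,1,1] :
        Matrix (Fin 3) (Fin 3) (ZMod 2)) ![C₁, C₁, C₂]) ∧
    Module.finrank (ZMod 2)
      (matrixProductCode (!![1,0,1; 1,1,0; 1,1,1] :
        Matrix (Fin 3) (Fin 3) (ZMod 2)) ![C₁, C₁, C₂]) = 2 * k₁ + k₂ ∧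
    min (2 * d₁) d₂
      ≤ minDist (matrixProductCode (!![1,0,1; 1,1,0; 1,1,1] :
          Matrix (Fin 3) (Fin 3) (ZMod 2)) ![C₁, C₁, C₂]) := by
  refine ⟨isLCD_matrixProductCode _ mul_transpose_eq_permMatrix_swap (fun i => ?_) (fun i => ?_),
    ?_, hd₁ ▸ hd₂ ▸ min_le_minDist_matrixProductCode_fin_three C₁ C₂⟩
  · fin_cases i <;> rfl
  · fin_cases i <;> assumption
  · rw [finrank_matrixProductCode linearIndependent_row_fin_three, Fin.sum_univ_three, two_mul,
      ← hk₁, ← hk₂]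
    rfl

theorem stmt19 {n : ℕ} (C₁ C₂ : Submodule (ZMod 2) (Fin n → ZMod 2))
    (k₁ d₁ k₂ d₂ : ℕ)
    (hLCD₁ : IsLCD C₁) (hLCD₂ : IsLCD C₂)
    (hk₁ : Module.finrank (ZMod 2) C₁ = k₁) (hd₁ : minDist C₁ = d₁)
    (hk₂ : Module.finrank (ZMod 2) C₂ = k₂) (hd₂ : minDist C₂ = d₂)
    (hC₁ : C₁ ≠ ⊥) (hC₂ : C₂ ≠ ⊥) :
    IsLCD (matrixProductCode (!![1,0,1; 1,1,0; 1,1,1] :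
        Matrix (Fin 3) (Fin 3) (ZMod 2)) ![C₁, C₁, C₂]) ∧
    Module.finrank (ZMod 2)
      (matrixProductCode (!![1,0,1; 1,1,0; 1,1,1] :
        Matrix (Fin 3) (Fin 3) (ZMod 2)) ![C₁, C₁, C₂]) = 2 * k₁ + k₂ ∧
    min (2 * d₁) d₂
      ≤ minDist (matrixProductCode (!![1,0,1; 1,1,0; 1,1,1] :
          Matrix (Fin 3) (Fin 3) (ZMod 2)) ![C₁, C₁, C₂]) :=
  stmt19_general C₁ C₂ k₁ d₁ k₂ d₂ hLCD₁ hLCD₂ hk₁ hd₁ hk₂ hd₂
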